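/- arXiv:1107.6021 — 9 statements merged into one kernel-verified Lean document; each statement's English description precedes it below -/
import Mathlib

section
/- Let A be an associative algebra. Then the map R defined on the direct sum Â = A ⊕ A (with second copy written a′) by R(a′) = λ·a and R(a) = −λ·a, where Â carries the product a∘b = a≺b + a≻b + a·b, a∘b′ = (a≻b)′, a′∘b = (a≺b)′, a′∘b′ = (a·b)′ for a dendriform trialgebra structure (≺, ≻, ·) on A, is a Rota–Baxter operator of weight λ on Â, i.e., R(x)∘R(y) = R(x∘R(y) + R(x)∘y + λ x∘y) for all x, y ∈ Â. -/
/-- For a dendriform-trialgebra-type doubling product on Â = A ⊕ A,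
the map R(a') = λa, R(a) = -λa is a Rota–Baxter operator of weight λ.
An element (a, b) of A × A represents a + b'. -/
theorem stmt0 {K A : Type*} [Field K] [AddCommGroup A] [Module K A]
    (p s d : A →ₗ[K] A →ₗ[K] A) (lam : K)
    (mul : A × A → A × A → A × A)
    (hmul : ∀ x y : A × A,
      mul x y = (p x.1 y.1 + s x.1 y.1 + d x.1 y.1,
                 s x.1 y.2 + p x.2 y.1 + d x.2 y.2))
    (R : A × A → A × A)
    (hR : ∀ x : A × A, R x = (lam • x.2 - lam • x.1, 0)) :
    ∀ x y : A × A,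
      mul (R x) (R y) = R (mul x (R y) + mul (R x) y + lam • mul x y) := by
  intro x y
  ext
  · simp only [hR, hmul, map_sub, map_smul, map_zero, LinearMap.sub_apply, LinearMap.smul_apply,
      LinearMap.zero_apply, Prod.fst_add, Prod.snd_add, Prod.smul_fst, Prod.smul_snd]
    module
  -- `R` takes values in the first copy of `A`, and the product of two such elements stays there.
  · simp [hmul, hR]
end

section
/- Let A be a vector space with two bilinear operations ≺, ≻. On Â = A ⊕ A′ define the product a∘b = a≺b + a≻b, a∘b′ = (a≻b)′, a′∘b = (a≺b)′, a′∘b′ = 0. Then the linear map R defined by R(a′) = a, R(a) = 0 is a Rota–Baxter operator of weight 0 on Â, i.e., R(x)∘R(y) = R(x∘R(y) + R(x)∘y) for all x, y ∈ Â. -/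
/-- An element `(a, b)` of `A × A` represents `a + b′`, with `p` for `≺` and `s` for `≻`. -/
theorem stmt1 {K A : Type*} [Field K] [AddCommGroup A] [Module K A]
    (p s : A →ₗ[K] A →ₗ[K] A)
    (mul : A × A → A × A → A × A)
    (hmul : ∀ x y : A × A,
      mul x y = (p x.1 y.1 + s x.1 y.1, s x.1 y.2 + p x.2 y.1))
    (R : A × A → A × A)
    (hR : ∀ x : A × A, R x = (x.2, 0)) :
    ∀ x y : A × A, mul (R x) (R y) = R (mul x (R y) + mul (R x) y) := by
  intro x y
  -- `R` keeps only the primed parts: `(x₂ ≺ y₂)′` from `x ∘ R y` and `(x₂ ≻ y₂)′` from `R x ∘ y`.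
  simp only [hmul, hR, map_zero, LinearMap.zero_apply, add_zero, zero_add, Prod.snd_add]
end

section
/- Let B be an associative algebra over a field, and let R be a Rota–Baxter operator of weight λ ≠ 0 on B. Then B equipped with x≻y = (1/λ)R(x)y, x≺y = (1/λ)xR(y), x·y = xy is a dendriform trialgebra, i.e., satisfies all seven Loday–Ronco dendriform trialgebra identities. -/
/-! Dividing the Rota–Baxter identity by `λ` says that `R` sends the total product
`x ≺ y + x ≻ y + x · y` to `λ⁻¹ R(x) R(y)`; this gives the two trialgebra identities
involving the total product, and the other five are associativity of `B` after
collecting scalars. -/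

theorem LinearMap.map_rotaBaxter_tridendriform_sum {K B : Type*} [DivisionRing K]
    [NonUnitalRing B] [Module K B] (R : B →ₗ[K] B) {lam : K} (hlam : lam ≠ 0)
    (hRB : ∀ x y : B, R x * R y = R (x * R y + R x * y + lam • (x * y))) (x y : B) :
    R (lam⁻¹ • (x * R y) + lam⁻¹ • (R x * y) + x * y) = lam⁻¹ • (R x * R y) := by
  rw [hRB, ← map_smul, smul_add, smul_add, inv_smul_smul₀ hlam]

/-- An associative algebra with a Rota–Baxter operator of weight λ ≠ 0
becomes a dendriform trialgebra via x≻y = (1/λ)R(x)y, x≺y = (1/λ)xR(y), x·y = xy. -/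
theorem stmt3 {K B : Type*} [Field K] [NonUnitalRing B] [Module K B]
    [SMulCommClass K B B] [IsScalarTower K B B]
    (R : B →ₗ[K] B) (lam : K) (hlam : lam ≠ 0)
    (hRB : ∀ x y : B, R x * R y = R (x * R y + R x * y + lam • (x * y)))
    (p s d : B → B → B)
    (hp : ∀ x y, p x y = lam⁻¹ • (x * R y))
    (hs : ∀ x y, s x y = lam⁻¹ • (R x * y))
    (hd : ∀ x y, d x y = x * y) :
    ∀ x y z : B,
      p (p x y) z = p x (p y z + s y z + d y z) ∧
      p (s x y) z = s x (p y z) ∧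
      s (p x y + s x y + d x y) z = s x (s y z) ∧
      d (s x y) z = s x (d y z) ∧
      d (p x y) z = d x (s y z) ∧
      p (d x y) z = d x (p y z) ∧
      d (d x y) z = d x (d y z) := by
  intro x y z
  simp only [hp, hs, hd, R.map_rotaBaxter_tridendriform_sum hlam hRB, smul_mul_assoc,
    mul_smul_comm, mul_assoc, and_self]
end

section
/- Let A be a vector space with three bilinear operations ≺, ≻, ·. Define Â = A ⊕ A′ with product a∘b = a≺b + a≻b + a·b, a∘b′ = (a≻b)′, a′∘b = (a≺b)′, a′∘b′ = (a·b)′. Then Â is an associative algebra if and only if (A, ≺, ≻, ·) is a dendriform trialgebra (satisfies the seven Loday–Ronco identities). -/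
/-!
Write `a + b′` as `(a, b)`. For pure elements `x, y, z ∈ A ∪ A′` with at least one primed,
the primed part of `(x ∘ y) ∘ z = x ∘ (y ∘ z)` is exactly one of the seven trialgebra identities,
the positions of the primes selecting which one; with no primes it is associativity of the total
product `≺ + ≻ + ·`, which is the sum of the seven identities. Trilinearity of `∘` does the rest.
-/

section

variable {R A : Type*} [CommSemiring R] [AddCommMonoid A] [Module R A]

/-- The dendriform trialgebra axioms for `x ≺ y = p x y`, `x ≻ y = s x y`, `x · y = d x y`,
each named after the two operations on its left-hand side `(x _ y) _ z`. -/
structure IsDendriformTrialgebra (p s d : A →ₗ[R] A →ₗ[R] A) : Prop where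
  prec_prec : ∀ x y z, p (p x y) z = p x ((p + s + d) y z)
  succ_prec : ∀ x y z, p (s x y) z = s x (p y z)
  total_succ : ∀ x y z, s ((p + s + d) x y) z = s x (s y z)
  succ_dot : ∀ x y z, d (s x y) z = s x (d y z)
  prec_dot : ∀ x y z, d (p x y) z = d x (s y z)
  dot_prec : ∀ x y z, p (d x y) z = d x (p y z)
  dot_dot : ∀ x y z, d (d x y) z = d x (d y z)

namespace IsDendriformTrialgebra

variable {p s d : A →ₗ[R] A →ₗ[R] A}

theorem total_assoc (h : IsDendriformTrialgebra p s d) (x y z : A) :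
    (p + s + d) ((p + s + d) x y) z = (p + s + d) x ((p + s + d) y z) := by
  have expand (u v : A) : (p + s + d) u v = p u v + s u v + d u v := rfl
  rw [expand ((p + s + d) x y) z, expand x ((p + s + d) y z), h.total_succ, ← h.prec_prec]
  simp only [LinearMap.add_apply, map_add]
  rw [h.succ_prec, h.dot_prec, h.succ_dot, h.prec_dot, h.dot_dot]
  abel

end IsDendriformTrialgebra

theorem isDendriformTrialgebra_iff {p s d : A →ₗ[R] A →ₗ[R] A} :
    IsDendriformTrialgebra p s d ↔
      ∀ x y z : A,
        p (p x y) z = p x (p y z + s y z + d y z) ∧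
        p (s x y) z = s x (p y z) ∧
        s (p x y + s x y + d x y) z = s x (s y z) ∧
        d (s x y) z = s x (d y z) ∧
        d (p x y) z = d x (s y z) ∧
        p (d x y) z = d x (p y z) ∧
        d (d x y) z = d x (d y z) := by
  simp only [← LinearMap.add_apply]
  constructor
  · intro h x y z
    exact ⟨h.1 x y z, h.2 x y z, h.3 x y z, h.4 x y z, h.5 x y z, h.6 x y z, h.7 x y z⟩
  · intro h
    exact ⟨fun x y z => (h x y z).1, fun x y z => (h x y z).2.1, fun x y z => (h x y z).2.2.1,
      fun x y z => (h x y z).2.2.2.1, fun x y z => (h x y z).2.2.2.2.1,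
      fun x y z => (h x y z).2.2.2.2.2.1, fun x y z => (h x y z).2.2.2.2.2.2⟩

/-- The product on `Â = A ⊕ A′`, with `(a, b)` standing for `a + b′`. -/
def doubleMul (p s d : A →ₗ[R] A →ₗ[R] A) (x y : A × A) : A × A :=
  ((p + s + d) x.1 y.1, s x.1 y.2 + p x.2 y.1 + d x.2 y.2)

theorem doubleMul_assoc_iff {p s d : A →ₗ[R] A →ₗ[R] A} :
    (∀ x y z : A × A, doubleMul p s d (doubleMul p s d x y) z =
      doubleMul p s d x (doubleMul p s d y z)) ↔ IsDendriformTrialgebra p s d := by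
  constructor
  · intro h
    have h' (x y z : A × A) := congrArg Prod.snd (h x y z)
    exact
      { prec_prec := fun x y z => by simpa [doubleMul] using h' (0, x) (y, 0) (z, 0)
        succ_prec := fun x y z => by simpa [doubleMul] using h' (x, 0) (0, y) (z, 0)
        total_succ := fun x y z => by simpa [doubleMul] using h' (x, 0) (y, 0) (0, z)
        succ_dot := fun x y z => by simpa [doubleMul] using h' (x, 0) (0, y) (0, z)
        prec_dot := fun x y z => by simpa [doubleMul] using h' (0, x) (y, 0) (0, z)
        dot_prec := fun x y z => by simpa [doubleMul] using h' (0, x) (0, y) (z, 0)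
        dot_dot := fun x y z => by simpa [doubleMul] using h' (0, x) (0, y) (0, z) }
  · intro h x y z
    refine Prod.ext (h.total_assoc x.1 y.1 z.1) ?_
    have hs := h.total_succ x.1 y.1 z.2
    simp only [doubleMul, map_add, LinearMap.add_apply] at hs ⊢
    rw [hs, h.prec_prec, h.succ_prec, h.dot_prec, h.succ_dot, h.prec_dot, h.dot_dot]
    simp only [LinearMap.add_apply, map_add]
    abel

end

/-- The doubling Â = A ⊕ A' of (A, ≺, ≻, ·) is associative iff
(A, ≺, ≻, ·) is a dendriform trialgebra (the seven Loday–Ronco identities).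
An element (a, b) of A × A represents a + b'. -/
theorem stmt4 {K A : Type*} [Field K] [AddCommGroup A] [Module K A]
    (p s d : A →ₗ[K] A →ₗ[K] A)
    (mul : A × A → A × A → A × A)
    (hmul : ∀ x y : A × A,
      mul x y = (p x.1 y.1 + s x.1 y.1 + d x.1 y.1,
                 s x.1 y.2 + p x.2 y.1 + d x.2 y.2)) :
    (∀ x y z : A × A, mul (mul x y) z = mul x (mul y z)) ↔
    (∀ x y z : A,
      p (p x y) z = p x (p y z + s y z + d y z) ∧
      p (s x y) z = s x (p y z) ∧
      s (p x y + s x y + d x y) z = s x (s y z) ∧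
      d (s x y) z = s x (d y z) ∧
      d (p x y) z = d x (s y z) ∧
      p (d x y) z = d x (p y z) ∧
      d (d x y) z = d x (d y z)) := by
  obtain rfl : mul = doubleMul p s d := funext₂ hmul
  rw [doubleMul_assoc_iff, isDendriformTrialgebra_iff]
end

section
/- Let A be a vector space with two bilinear operations ≺, ≻. Define Â = A ⊕ A′ with product a∘b = a≺b + a≻b, a∘b′ = (a≻b)′, a′∘b = (a≺b)′, a′∘b′ = 0. Then Â is an associative algebra if and only if (A, ≺, ≻) is a dendriform dialgebra. -/
/-!
By bilinearity the associator of `Â` is determined by its values on triples of elements of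
`A` and `A′`. On `(a′, b, c)`, `(a, b′, c)` and `(a, b, c′)` its `A′`-component is exactly the
first, second and third dendriform axiom, respectively. Conversely, the `A`-component of the
associator on `(a, b, c)` is the sum of the three axioms, and the `A′`-components on the
remaining triples are instances of them; all other triples have vanishing associator.
-/

namespace Dendriform

variable {R A : Type*} [CommSemiring R] [AddCommMonoid A] [Module R A]

def IsDendriform (p s : A →ₗ[R] A →ₗ[R] A) : Prop :=
  ∀ x y z : A,
    p (p x y) z = p x (p y z + s y z) ∧
    p (s x y) z = s x (p y z) ∧
    s (p x y + s x y) z = s x (s y z)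

def doubleMul (p s : A →ₗ[R] A →ₗ[R] A) (x y : A × A) : A × A :=
  (p x.1 y.1 + s x.1 y.1, s x.1 y.2 + p x.2 y.1)

variable {p s : A →ₗ[R] A →ₗ[R] A}

theorem isDendriform_of_doubleMul_assoc
    (h : ∀ x y z : A × A,
      doubleMul p s (doubleMul p s x y) z = doubleMul p s x (doubleMul p s y z)) :
    IsDendriform p s := fun x y z => by
  refine ⟨?_, ?_, ?_⟩
  · simpa [doubleMul] using congrArg Prod.snd (h (0, x) (y, 0) (z, 0))
  · simpa [doubleMul] using congrArg Prod.snd (h (x, 0) (0, y) (z, 0))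
  · simpa [doubleMul] using congrArg Prod.snd (h (x, 0) (y, 0) (0, z))

theorem doubleMul_assoc_of_isDendriform (h : IsDendriform p s) (x y z : A × A) :
    doubleMul p s (doubleMul p s x y) z = doubleMul p s x (doubleMul p s y z) := by
  obtain ⟨x, x'⟩ := x
  obtain ⟨y, y'⟩ := y
  obtain ⟨z, z'⟩ := z
  simp only [doubleMul, Prod.mk.injEq]
  constructor
  · obtain ⟨hpp, hsp, hss⟩ := h x y z
    rw [map_add p, LinearMap.add_apply, hpp, hsp, hss, map_add (s x)]
    abel
  · rw [(h x y z').2.2, map_add p, LinearMap.add_apply, (h x y' z).2.1, (h x' y z).1,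
      map_add (s x)]
    abel

theorem doubleMul_assoc_iff :
    (∀ x y z : A × A,
      doubleMul p s (doubleMul p s x y) z = doubleMul p s x (doubleMul p s y z)) ↔
      IsDendriform p s :=
  ⟨isDendriform_of_doubleMul_assoc, doubleMul_assoc_of_isDendriform⟩

end Dendriform

/-- The doubling Â = A ⊕ A' of (A, ≺, ≻) (with a'∘b' = 0) is
associative iff (A, ≺, ≻) is a dendriform dialgebra. -/
theorem stmt5 {K A : Type*} [Field K] [AddCommGroup A] [Module K A]
    (p s : A →ₗ[K] A →ₗ[K] A)
    (mul : A × A → A × A → A × A)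
    (hmul : ∀ x y : A × A,
      mul x y = (p x.1 y.1 + s x.1 y.1, s x.1 y.2 + p x.2 y.1)) :
    (∀ x y z : A × A, mul (mul x y) z = mul x (mul y z)) ↔
    (∀ x y z : A,
      p (p x y) z = p x (p y z + s y z) ∧
      p (s x y) z = s x (p y z) ∧
      s (p x y + s x y) z = s x (s y z)) := by
  obtain rfl : mul = Dendriform.doubleMul p s := funext₂ hmul
  exact Dendriform.doubleMul_assoc_iff
end

section
/- Every dendriform dialgebra A embeds into an associative algebra B carrying a Rota–Baxter operator R of weight 0, via an injective linear map ι: A → B with ι(a≻b) = R(ι(a))ι(b) and ι(a≺b) = ι(a)R(ι(b)). Concretely, B = A ⊕ A′ with product a∘b = a≺b + a≻b, a∘b′ = (a≻b)′, a′∘b = (a≺b)′, a′∘b′ = 0, R(a′) = a, R(a) = 0, and ι(a) = a′. -/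
/-! The three dendriform axioms say precisely that the total product `x ⋆ y = x ≺ y + x ≻ y`
is associative and that `A` is a bimodule over `(A, ⋆)` with `≻` as left and `≺` as right
action. The doubling `A ⊕ A'` is then the square-zero extension of `(A, ⋆)` by this
bimodule, hence associative. The projection `R(a, a') = (a', 0)` is Rota–Baxter of weight 0
because both sides of the identity reduce to `(x' ⋆ y', 0)`. -/

section Dendriform

variable {K A : Type*} [CommSemiring K] [AddCommMonoid A] [Module K A]

/-- `p` is `≺` and `s` is `≻`. -/
structure IsDendriform (p s : A →ₗ[K] A →ₗ[K] A) : Prop where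
  prec_prec : ∀ x y z : A, p (p x y) z = p x (p y z + s y z)
  succ_prec : ∀ x y z : A, p (s x y) z = s x (p y z)
  total_succ : ∀ x y z : A, s (p x y + s x y) z = s x (s y z)

/-- The product of `A ⊕ A'`, with the primed copy as the second factor of `A × A`. -/
def doublingMul (p s : A →ₗ[K] A →ₗ[K] A) (x y : A × A) : A × A :=
  (p x.1 y.1 + s x.1 y.1, s x.1 y.2 + p x.2 y.1)

namespace IsDendriform

variable {p s : A →ₗ[K] A →ₗ[K] A}

theorem total_assoc (hA : IsDendriform p s) (x y z : A) :
    p (p x y + s x y) z + s (p x y + s x y) z = p x (p y z + s y z) + s x (p y z + s y z) := by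
  rw [hA.total_succ, map_add, LinearMap.add_apply, hA.prec_prec, hA.succ_prec, (s x).map_add,
    add_assoc]

theorem doublingMul_assoc (hA : IsDendriform p s) (x y z : A × A) :
    doublingMul p s (doublingMul p s x y) z = doublingMul p s x (doublingMul p s y z) := by
  simp only [doublingMul, Prod.mk.injEq, hA.total_assoc, true_and]
  rw [hA.total_succ, map_add, LinearMap.add_apply, hA.succ_prec, hA.prec_prec, (s x.1).map_add]
  abel

end IsDendriform

theorem doublingMul_isRotaBaxter (p s : A →ₗ[K] A →ₗ[K] A) (x y : A × A) :
    let R := LinearMap.inl K A A ∘ₗ LinearMap.snd K A A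
    doublingMul p s (R x) (R y) = R (doublingMul p s x (R y) + doublingMul p s (R x) y) := by
  simp [doublingMul, add_comm]

end Dendriform

/-- Every dendriform dialgebra (A, ≺, ≻) embeds into an associative
algebra with a Rota–Baxter operator of weight 0: take Â = A ⊕ A' with the
doubling product (a'∘b' = 0), R(a') = a, R(a) = 0, ι(a) = a'. -/
theorem stmt7 {K A : Type*} [Field K] [AddCommGroup A] [Module K A]
    (p s : A →ₗ[K] A →ₗ[K] A)
    (h1 : ∀ x y z : A, p (p x y) z = p x (p y z + s y z))
    (h2 : ∀ x y z : A, p (s x y) z = s x (p y z))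
    (h3 : ∀ x y z : A, s (p x y + s x y) z = s x (s y z))
    (mul : A × A → A × A → A × A)
    (hmul : ∀ x y : A × A,
      mul x y = (p x.1 y.1 + s x.1 y.1, s x.1 y.2 + p x.2 y.1))
    (R : A × A → A × A)
    (hR : ∀ x : A × A, R x = (x.2, 0))
    (iota : A → A × A)
    (hiota : ∀ a : A, iota a = (0, a)) :
    (∀ x y z : A × A, mul (mul x y) z = mul x (mul y z)) ∧
    (∀ x y : A × A, mul (R x) (R y) = R (mul x (R y) + mul (R x) y)) ∧
    Function.Injective iota ∧ IsLinearMap K iota ∧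
    (∀ a b : A, iota (s a b) = mul (R (iota a)) (iota b)) ∧
    (∀ a b : A, iota (p a b) = mul (iota a) (R (iota b))) := by
  obtain rfl : mul = doublingMul p s := funext fun x => funext (hmul x)
  obtain rfl : R = LinearMap.inl K A A ∘ₗ LinearMap.snd K A A := funext hR
  obtain rfl : iota = LinearMap.inr K A A := funext hiota
  exact ⟨(⟨h1, h2, h3⟩ : IsDendriform p s).doublingMul_assoc, doublingMul_isRotaBaxter p s,
    LinearMap.inr_injective, (LinearMap.inr K A A).isLinear,
    fun a b => by simp [doublingMul], fun a b => by simp [doublingMul]⟩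
end

section
/- Let A be an associative algebra with a derivation d satisfying d² = 0. Then A with the operations x⊢y = d(x)y, x⊣y = xd(y), x⊥y = xy is a skew-triassociative algebra: ⊢, ⊣, ⊥ are each associative (in the dialgebra sense: x⊣(y⊣z) = (x⊣y)⊣z, x⊢(y⊢z) = (x⊢y)⊢z, (x⊥y)⊥z = x⊥(y⊥z)), and the identities (x⊣y)⊢z = (x⊢y)⊢z, x⊣(y⊢z) = x⊣(y⊣z), x⊢(y⊣z) = (x⊢y)⊣z hold, together with the mixed identities of skew trialgebras obtained from associativity with emphasized variables: e.g. x⊥(y⊢z) = (x⊣y)⊥z, x⊢(y⊥z) = (x⊢y)⊥z, (x⊥y)⊣z = x⊥(y⊣z). -/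
/-!
Since `d ∘ d = 0`, the Leibniz rule gives `d (x * d y) = d x * d y = d (d x * y)`.
With these two rules and associativity of the product, both sides of each of the nine
identities reduce to the same monomial in `x, d x, y, d y, z, d z`.
-/

section SquareZeroDerivation

variable {A : Type*} [NonUnitalNonAssocSemiring A] {d : A → A}

theorem map_mul_map_of_leibniz_of_sq_eq_zero (hder : ∀ x y : A, d (x * y) = d x * y + x * d y)
    (hsq : ∀ x : A, d (d x) = 0) (x y : A) : d (x * d y) = d x * d y := by
  rw [hder, hsq, mul_zero, add_zero]

theorem map_map_mul_of_leibniz_of_sq_eq_zero (hder : ∀ x y : A, d (x * y) = d x * y + x * d y)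
    (hsq : ∀ x : A, d (d x) = 0) (x y : A) : d (d x * y) = d x * d y := by
  rw [hder, hsq, zero_mul, zero_add]

end SquareZeroDerivation

theorem stmt9_general {A : Type*} [NonUnitalRing A]
    (d : A → A)
    (hder : ∀ x y : A, d (x * y) = d x * y + x * d y)
    (hsq : ∀ x : A, d (d x) = 0)
    (l r m : A → A → A)
    (hl : ∀ x y, l x y = d x * y)
    (hr : ∀ x y, r x y = x * d y)
    (hm : ∀ x y, m x y = x * y) :
    ∀ x y z : A,
      r x (r y z) = r (r x y) z ∧
      l x (l y z) = l (l x y) z ∧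
      m (m x y) z = m x (m y z) ∧
      l (r x y) z = l (l x y) z ∧
      r x (l y z) = r x (r y z) ∧
      l x (r y z) = r (l x y) z ∧
      m x (l y z) = m (r x y) z ∧
      l x (m y z) = m (l x y) z ∧
      r (m x y) z = m x (r y z) := by
  intro x y z
  simp only [hl, hr, hm, map_mul_map_of_leibniz_of_sq_eq_zero hder hsq,
    map_map_mul_of_leibniz_of_sq_eq_zero hder hsq, mul_assoc, and_self]

/-- An associative algebra with a derivation d satisfying d² = 0
becomes a skew-triassociative algebra via x⊢y = d(x)y, x⊣y = xd(y), x⊥y = xy. -/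
theorem stmt9 {A : Type*} [NonUnitalRing A]
    (d : A → A)
    (hadd : ∀ x y : A, d (x + y) = d x + d y)
    (hder : ∀ x y : A, d (x * y) = d x * y + x * d y)
    (hsq : ∀ x : A, d (d x) = 0)
    (l r m : A → A → A)
    (hl : ∀ x y, l x y = d x * y)
    (hr : ∀ x y, r x y = x * d y)
    (hm : ∀ x y, m x y = x * y) :
    ∀ x y z : A,
      r x (r y z) = r (r x y) z ∧
      l x (l y z) = l (l x y) z ∧
      m (m x y) z = m x (m y z) ∧
      l (r x y) z = l (l x y) z ∧
      r x (l y z) = r x (r y z) ∧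
      l x (r y z) = r (l x y) z ∧
      m x (l y z) = m (r x y) z ∧
      l x (m y z) = m (l x y) z ∧
      r (m x y) z = m x (r y z) :=
  stmt9_general d hder hsq l r m hl hr hm
end

section
/- Let A be a triassociative algebra, let Ā = A/A₀ where A₀ = span{a⊢b − a⊣b, a⊢b − a⊥b}, and form Â = Ā ⊕ A with operations ā∘x = a⊢x, x∘ā = x⊣a, ā∘b̄ = (a⊢b)‾, x∘y = x⊥y for ā, b̄ ∈ Ā and x, y ∈ A. Then these operations are well-defined and Â is an associative algebra. -/
/-!
For `v ∈ A₀` both `v ⊢ ·` and `· ⊣ v` vanish (axioms `h1`–`h4`), and `a ⊢ v ≡ a ⊣ v = 0`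
modulo `A₀`, so `a ⊢ A₀ ⊆ A₀`. Hence `⊢` descends to a product on `Ā`, and `Ā` acts on `A`
by `⊢` from the left and by `⊣` from the right. Associativity of `Â` is associativity of `⊢`
in the `Ā`-component; in the `A`-component both sides expand into seven monomials which match
pairwise, each pair by one axiom.
-/

namespace Triassociative

open LinearMap Submodule

variable {R A : Type*} [CommRing R] [AddCommGroup A] [Module R A]

/-- The subspace `A₀` of the paper. -/
def diffSpan (l r m : A →ₗ[R] A →ₗ[R] A) : Submodule R A :=
  span R {v | ∃ a b : A, v = l a b - r a b ∨ v = l a b - m a b}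

variable {l r m : A →ₗ[R] A →ₗ[R] A}

theorem diffSpan_le_ker (h1 : ∀ x y z : A, l (r x y) z = l (l x y) z)
    (h2 : ∀ x y z : A, l (m x y) z = l (l x y) z) :
    diffSpan l r m ≤ ker l := by
  rw [diffSpan, span_le]
  rintro v ⟨a, b, rfl | rfl⟩ <;> ext z <;> simp [h1, h2]

theorem diffSpan_le_ker_flip (h3 : ∀ x y z : A, r x (l y z) = r x (r y z))
    (h4 : ∀ x y z : A, r x (m y z) = r x (r y z)) :
    diffSpan l r m ≤ ker r.flip := by
  rw [diffSpan, span_le]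
  rintro v ⟨a, b, rfl | rfl⟩ <;> ext z <;> simp [h3, h4]

theorem left_mem_diffSpan (h3 : ∀ x y z : A, r x (l y z) = r x (r y z))
    (h4 : ∀ x y z : A, r x (m y z) = r x (r y z)) (a : A) {v : A}
    (hv : v ∈ diffSpan l r m) : l a v ∈ diffSpan l r m := by
  have hdiff : l a v - r a v ∈ diffSpan l r m := subset_span ⟨a, v, Or.inl rfl⟩
  have hr : r a v = 0 := congrArg (· a) (diffSpan_le_ker_flip h3 h4 hv)
  simpa [hr] using hdiff

theorem diffSpan_le_ker_compr₂_mkQ (h1 : ∀ x y z : A, l (r x y) z = l (l x y) z)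
    (h2 : ∀ x y z : A, l (m x y) z = l (l x y) z) :
    diffSpan l r m ≤ ker (l.compr₂ (diffSpan l r m).mkQ) := fun _ hv ↦ by
  ext a
  simp [show l _ = 0 from diffSpan_le_ker h1 h2 hv]

theorem diffSpan_le_ker_flip_compr₂_mkQ (h3 : ∀ x y z : A, r x (l y z) = r x (r y z))
    (h4 : ∀ x y z : A, r x (m y z) = r x (r y z)) :
    diffSpan l r m ≤ ker (l.compr₂ (diffSpan l r m).mkQ).flip := fun _ hv ↦ by
  ext a
  simpa using left_mem_diffSpan h3 h4 a hv

theorem assoc_snd (hl : ∀ x y z : A, l x (l y z) = l (l x y) z)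
    (hr : ∀ x y z : A, r x (r y z) = r (r x y) z)
    (hm : ∀ x y z : A, m x (m y z) = m (m x y) z)
    (h3 : ∀ x y z : A, r x (l y z) = r x (r y z))
    (h5 : ∀ x y z : A, r (l x y) z = l x (r y z))
    (h6 : ∀ x y z : A, m (r x y) z = m x (l y z))
    (h7 : ∀ x y z : A, l x (m y z) = m (l x y) z)
    (h8 : ∀ x y z : A, r (m x y) z = m x (r y z)) (a b c x y z : A) :
    l (l a b) z + r (l a y + r x b + m x y) c + m (l a y + r x b + m x y) z =
      l a (l b z + r y c + m y z) + r x (l b c) + m x (l b z + r y c + m y z) := by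
  simp only [map_add, LinearMap.add_apply]
  rw [hl, ← h5, h3, hr, ← h8, h7, ← h6, hm]
  abel

end Triassociative

open Triassociative in
/-- For a triassociative algebra A, with A₀ = span{a⊢b − a⊣b,
a⊢b − a⊥b} and Ā = A/A₀, the product on Â = Ā ⊕ A given by
(ā, x)∘(b̄, y) = ((a⊢b)‾, a⊢y + x⊣b + x⊥y) is well defined and associative. -/
theorem stmt12 {K A : Type*} [Field K] [AddCommGroup A] [Module K A]
    (l r m : A →ₗ[K] A →ₗ[K] A)
    (hl : ∀ x y z : A, l x (l y z) = l (l x y) z)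
    (hr : ∀ x y z : A, r x (r y z) = r (r x y) z)
    (hm : ∀ x y z : A, m x (m y z) = m (m x y) z)
    (h1 : ∀ x y z : A, l (r x y) z = l (l x y) z)
    (h2 : ∀ x y z : A, l (m x y) z = l (l x y) z)
    (h3 : ∀ x y z : A, r x (l y z) = r x (r y z))
    (h4 : ∀ x y z : A, r x (m y z) = r x (r y z))
    (h5 : ∀ x y z : A, r (l x y) z = l x (r y z))
    (h6 : ∀ x y z : A, m (r x y) z = m x (l y z))
    (h7 : ∀ x y z : A, l x (m y z) = m (l x y) z)
    (h8 : ∀ x y z : A, r (m x y) z = m x (r y z))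
    (A₀ : Submodule K A)
    (hA₀ : A₀ = Submodule.span K
      {v | ∃ a b : A, v = l a b - r a b ∨ v = l a b - m a b}) :
    ∃ mul : ((A ⧸ A₀) × A) → ((A ⧸ A₀) × A) → ((A ⧸ A₀) × A),
      (∀ a b x y : A,
        mul (Submodule.Quotient.mk a, x) (Submodule.Quotient.mk b, y)
          = (Submodule.Quotient.mk (l a b), l a y + r x b + m x y)) ∧
      (∀ u v w : (A ⧸ A₀) × A, mul (mul u v) w = mul u (mul v w)) := by
  change A₀ = diffSpan l r m at hA₀
  subst hA₀
  let mulQ := (l.compr₂ (diffSpan l r m).mkQ).liftQ₂ _ _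
    (diffSpan_le_ker_compr₂_mkQ h1 h2)
    (diffSpan_le_ker_flip_compr₂_mkQ h3 h4)
  let actL := (diffSpan l r m).liftQ l (diffSpan_le_ker h1 h2)
  let actR := (diffSpan l r m).liftQ r.flip (diffSpan_le_ker_flip h3 h4)
  refine ⟨fun u v ↦ (mulQ u.1 v.1, actL u.1 v.2 + actR v.1 u.2 + m u.2 v.2),
    fun _ _ _ _ ↦ rfl, ?_⟩
  rintro ⟨p, x⟩ ⟨q, y⟩ ⟨s, z⟩
  obtain ⟨a, rfl⟩ := Submodule.Quotient.mk_surjective _ p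
  obtain ⟨b, rfl⟩ := Submodule.Quotient.mk_surjective _ q
  obtain ⟨c, rfl⟩ := Submodule.Quotient.mk_surjective _ s
  exact Prod.ext (congrArg Submodule.Quotient.mk (hl a b c).symm)
    (assoc_snd hl hr hm h3 h5 h6 h7 h8 a b c x y z)
end

section
/- Let A be a diassociative algebra (associative dialgebra). Then A₀ = span{a⊢b − a⊣b : a, b ∈ A} is an ideal of A, and with Ā = A/A₀ and Â = Ā ⊕ A equipped with ā∘x = a⊢x, x∘ā = x⊣a, ā∘b̄ = (a⊢b)‾, x∘y = 0, the algebra Â is associative. -/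
/-!
The axioms `(x ⊣ y) ⊢ z = (x ⊢ y) ⊢ z` and `x ⊣ (y ⊢ z) = x ⊣ (y ⊣ z)` say exactly that
every `a ⊢ b - a ⊣ b` is killed by `· ⊢ z` and by `x ⊣ ·`. Hence `A₀` lies in both of these
annihilators, which makes the mixed products `ā ∘ x = a ⊢ x` and `x ∘ ā = x ⊣ a` well defined
on `Ā`; since `a ⊢ ·` and `· ⊣ a` also map generators of `A₀` to generators, `A₀` is an
ideal and `ā ∘ b̄ = (a ⊢ b)‾` is well defined. Associativity of `Â` then reduces, on representatives, to the
axioms `(a ⊢ b) ⊢ z = a ⊢ (b ⊢ z)`, `(a ⊢ y) ⊣ c = a ⊢ (y ⊣ c)`, `(x ⊣ b) ⊣ c = x ⊣ (b ⊣ c)`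
and `x ⊣ (b ⊢ c) = x ⊣ (b ⊣ c)`.
-/

namespace Diassociative

open Submodule

variable {R A : Type*} [CommRing R] [AddCommGroup A] [Module R A]

section Defect

variable (l r : A →ₗ[R] A →ₗ[R] A)

def defect : Submodule R A :=
  span R {v | ∃ a b : A, v = l a b - r a b}

variable {l r}

theorem defect_le_of_forall {p : Submodule R A} (h : ∀ a b, l a b - r a b ∈ p) :
    defect l r ≤ p :=
  span_le.mpr <| by rintro _ ⟨a, b, rfl⟩; exact h a b

theorem sub_mem_defect (a b : A) : l a b - r a b ∈ defect l r :=
  subset_span ⟨a, b, rfl⟩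

theorem defect_le_ker_left (h4 : ∀ x y z : A, l (r x y) z = l (l x y) z) :
    defect l r ≤ LinearMap.ker l :=
  defect_le_of_forall fun a b => by
    ext z
    simp [h4]

theorem defect_le_ker_flip_right (h5 : ∀ x y z : A, r x (l y z) = r x (r y z)) :
    defect l r ≤ LinearMap.ker r.flip :=
  defect_le_of_forall fun a b => by
    ext x
    simp [h5]

theorem left_mem_defect (hl : ∀ x y z : A, l x (l y z) = l (l x y) z)
    (h2 : ∀ x y z : A, l x (r y z) = r (l x y) z) (a : A) {x : A} (hx : x ∈ defect l r) :
    l a x ∈ defect l r := by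
  refine defect_le_of_forall (p := (defect l r).comap (l a)) (fun b c => ?_) hx
  rw [mem_comap, map_sub, hl, h2]
  exact sub_mem_defect _ _

theorem right_mem_defect (hr : ∀ x y z : A, r x (r y z) = r (r x y) z)
    (h2 : ∀ x y z : A, l x (r y z) = r (l x y) z) (a : A) {x : A} (hx : x ∈ defect l r) :
    r x a ∈ defect l r := by
  refine defect_le_of_forall (p := (defect l r).comap (r.flip a)) (fun b c => ?_) hx
  rw [mem_comap, map_sub, LinearMap.flip_apply, LinearMap.flip_apply, ← h2, ← hr]
  exact sub_mem_defect _ _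

end Defect

section Hat

variable {l r : A →ₗ[R] A →ₗ[R] A} {N : Submodule R A}

theorem le_ker_compr₂_mkQ (hN : N ≤ LinearMap.ker l) :
    N ≤ LinearMap.ker (l.compr₂ N.mkQ) := fun x hx => by
  ext y
  simp [LinearMap.mem_ker.mp (hN hx)]

theorem le_ker_flip_compr₂_mkQ (hN : ∀ a, ∀ x ∈ N, l a x ∈ N) :
    N ≤ LinearMap.ker (l.compr₂ N.mkQ).flip := fun x hx => by
  ext a
  simpa [Quotient.mk_eq_zero] using hN a x hx

variable (l r N)

def hatMul (hlN : N ≤ LinearMap.ker l) (hN : ∀ a, ∀ x ∈ N, l a x ∈ N)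
    (hrN : N ≤ LinearMap.ker r.flip) (u v : (A ⧸ N) × A) : (A ⧸ N) × A :=
  ((l.compr₂ N.mkQ).liftQ₂ N N (le_ker_compr₂_mkQ hlN) (le_ker_flip_compr₂_mkQ hN) u.1 v.1,
    N.liftQ l hlN u.1 v.2 + N.liftQ r.flip hrN v.1 u.2)

variable {l r N}

theorem hatMul_mk (hlN : N ≤ LinearMap.ker l) (hN : ∀ a, ∀ x ∈ N, l a x ∈ N)
    (hrN : N ≤ LinearMap.ker r.flip) (a b x y : A) :
    hatMul l r N hlN hN hrN (Submodule.Quotient.mk a, x) (Submodule.Quotient.mk b, y) =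
      (Submodule.Quotient.mk (l a b), l a y + r x b) :=
  rfl

theorem hatMul_assoc (hr : ∀ x y z : A, r x (r y z) = r (r x y) z)
    (h2 : ∀ x y z : A, l x (r y z) = r (l x y) z)
    (hl : ∀ x y z : A, l x (l y z) = l (l x y) z)
    (h5 : ∀ x y z : A, r x (l y z) = r x (r y z))
    (hlN : N ≤ LinearMap.ker l) (hN : ∀ a, ∀ x ∈ N, l a x ∈ N)
    (hrN : N ≤ LinearMap.ker r.flip) (u v w : (A ⧸ N) × A) :
    hatMul l r N hlN hN hrN (hatMul l r N hlN hN hrN u v) w =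
      hatMul l r N hlN hN hrN u (hatMul l r N hlN hN hrN v w) := by
  obtain ⟨⟨a⟩, x⟩ := u
  obtain ⟨⟨b⟩, y⟩ := v
  obtain ⟨⟨c⟩, z⟩ := w
  simp only [Quotient.quot_mk_eq_mk, hatMul_mk, map_add, LinearMap.add_apply, hl, Prod.mk.injEq,
    true_and]
  rw [← h2, ← hr, ← h5]
  abel

end Hat

end Diassociative

/-- For a diassociative algebra A, A₀ = span{a⊢b − a⊣b} is an
ideal, and Â = Ā ⊕ A with (ā, x)∘(b̄, y) = ((a⊢b)‾, a⊢y + x⊣b) is associative. -/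
theorem stmt13 {K A : Type*} [Field K] [AddCommGroup A] [Module K A]
    (l r : A →ₗ[K] A →ₗ[K] A)
    (hr : ∀ x y z : A, r x (r y z) = r (r x y) z)
    (h2 : ∀ x y z : A, l x (r y z) = r (l x y) z)
    (hl : ∀ x y z : A, l x (l y z) = l (l x y) z)
    (h4 : ∀ x y z : A, l (r x y) z = l (l x y) z)
    (h5 : ∀ x y z : A, r x (l y z) = r x (r y z))
    (A₀ : Submodule K A)
    (hA₀ : A₀ = Submodule.span K {v | ∃ a b : A, v = l a b - r a b}) :
    (∀ a : A, ∀ x ∈ A₀, l a x ∈ A₀ ∧ l x a ∈ A₀ ∧ r a x ∈ A₀ ∧ r x a ∈ A₀) ∧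
    (∃ mul : ((A ⧸ A₀) × A) → ((A ⧸ A₀) × A) → ((A ⧸ A₀) × A),
      (∀ a b x y : A,
        mul (Submodule.Quotient.mk a, x) (Submodule.Quotient.mk b, y)
          = (Submodule.Quotient.mk (l a b), l a y + r x b)) ∧
      (∀ u v w : (A ⧸ A₀) × A, mul (mul u v) w = mul u (mul v w))) := by
  change A₀ = Diassociative.defect l r at hA₀
  subst hA₀
  have hlN := Diassociative.defect_le_ker_left h4
  have hrN := Diassociative.defect_le_ker_flip_right h5
  have hN : ∀ a, ∀ x ∈ Diassociative.defect l r, l a x ∈ Diassociative.defect l r :=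
    fun a _ hx => Diassociative.left_mem_defect hl h2 a hx
  refine ⟨fun a x hx => ⟨hN a x hx, ?_, ?_, Diassociative.right_mem_defect hr h2 a hx⟩,
    Diassociative.hatMul l r _ hlN hN hrN, Diassociative.hatMul_mk hlN hN hrN,
    Diassociative.hatMul_assoc hr h2 hl h5 hlN hN hrN⟩
  · rw [LinearMap.mem_ker.mp (hlN hx)]
    exact zero_mem _
  · rw [← LinearMap.flip_apply, LinearMap.mem_ker.mp (hrN hx)]
    exact zero_mem _
end
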